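/- The mixed second partial derivative ∂²c*/∂a∂y of c*(a; y) = -y·W₋₁(f(a; y)) equals (aρ²/(γ²y²))·w/(1+w)³ with w = W₋₁(f(a; y)), and this is strictly positive; hence the consumption function is supermodular in (a, y). -/

import Mathlib

/-!
Along any curve `t ↦ -exp (z t)` the equation `W' x = W x / (x * (1 + W x))` turns into
`d/dt W (-exp (z t)) = W / (1 + W) * z'`: the factor `x` cancels against the derivative of
`-exp`. Since the exponent is affine in `a` with slope `-ρ/(γ y)`, the `a`-partial of
`-y * W (…)` is `(ρ/γ) * w/(1+w)`, whose `y`-derivative is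
`(ρ/γ) * (1+w)⁻² * w/(1+w) * ρa/(γy²)`. Positivity holds because `w < -1` makes `w` and
`(1+w)³` both negative.
-/

open Real Set

theorem neg_exp_mem_Ioo_of_lt_neg_one {z : ℝ} (hz : z < -1) :
    -exp z ∈ Ioo (-(exp 1)⁻¹) 0 := by
  refine ⟨?_, neg_neg_of_pos (exp_pos z)⟩
  rw [neg_lt_neg_iff, ← exp_neg]
  exact exp_lt_exp.mpr hz

theorem hasDerivAt_comp_neg_exp {W z : ℝ → ℝ} {z' t : ℝ} (hz : HasDerivAt z z' t)
    (hW : HasDerivAt W (W (-exp (z t)) / (-exp (z t) * (1 + W (-exp (z t))))) (-exp (z t))) :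
    HasDerivAt (fun s => W (-exp (z s))) (W (-exp (z t)) / (1 + W (-exp (z t))) * z') t := by
  refine (hW.comp t hz.exp.neg).congr_deriv ?_
  have := (exp_pos (z t)).ne'
  field_simp

theorem HasDerivAt.div_one_add {v : ℝ → ℝ} {v' t : ℝ} (hv : HasDerivAt v v' t)
    (ht : 1 + v t ≠ 0) :
    HasDerivAt (fun s => v s / (1 + v s)) (v' / (1 + v t) ^ 2) t := by
  refine (hv.div (hv.const_add 1) ht).congr_deriv ?_
  ring

theorem div_one_add_pow_three_pos {w : ℝ} (hw : w < -1) : 0 < w / (1 + w) ^ 3 :=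
  div_pos_of_neg_of_neg (by linarith) (Odd.pow_neg (by decide) (by linarith))

theorem hasDerivAt_exponent_left (ρ γ y a : ℝ) :
    HasDerivAt (fun a => -(ρ / (γ * y)) * (a + γ * y / ρ)) (-(ρ / (γ * y))) a := by
  simpa using ((hasDerivAt_id a).add_const (γ * y / ρ)).const_mul (-(ρ / (γ * y)))

section

variable {ρ γ a y : ℝ}

theorem exponent_lt_neg_one (hρ : 0 < ρ) (hγ : 0 < γ) (ha : 0 < a) (hy : 0 < y) :
    -(ρ / (γ * y)) * (a + γ * y / ρ) < -1 := by
  have hsplit : -(ρ / (γ * y)) * (a + γ * y / ρ) = -(ρ * a / (γ * y)) - 1 := by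
    field_simp
    ring
  rw [hsplit]
  have hpos : 0 < ρ * a / (γ * y) := by positivity
  linarith

theorem hasDerivAt_exponent_right (hρ : ρ ≠ 0) (hγ : γ ≠ 0) (hy : y ≠ 0) :
    HasDerivAt (fun y => -(ρ / (γ * y)) * (a + γ * y / ρ)) (ρ * a / (γ * y ^ 2)) y := by
  have hγy : HasDerivAt (fun y => γ * y) γ y := by simpa using (hasDerivAt_id y).const_mul γ
  refine (((hasDerivAt_const y ρ).div hγy (mul_ne_zero hγ hy)).neg.mul
    ((hγy.div_const ρ).const_add a)).congr_deriv ?_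
  simp only [Pi.neg_apply, Pi.div_apply]
  field_simp
  ring

variable {W : ℝ → ℝ}

theorem hasDerivAt_consumption_in_a (hy : y ≠ 0)
    (hW : HasDerivAt W (W (-exp (-(ρ / (γ * y)) * (a + γ * y / ρ))) /
      (-exp (-(ρ / (γ * y)) * (a + γ * y / ρ)) *
        (1 + W (-exp (-(ρ / (γ * y)) * (a + γ * y / ρ))))))
      (-exp (-(ρ / (γ * y)) * (a + γ * y / ρ)))) :
    HasDerivAt (fun a => -y * W (-exp (-(ρ / (γ * y)) * (a + γ * y / ρ))))
      (ρ / γ * (W (-exp (-(ρ / (γ * y)) * (a + γ * y / ρ))) /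
        (1 + W (-exp (-(ρ / (γ * y)) * (a + γ * y / ρ)))))) a := by
  refine ((hasDerivAt_comp_neg_exp (hasDerivAt_exponent_left ρ γ y a) hW).const_mul
    (-y)).congr_deriv ?_
  field_simp

theorem hasDerivAt_marginal_consumption_in_y (hρ : ρ ≠ 0) (hγ : γ ≠ 0) (hy : y ≠ 0)
    (hW : HasDerivAt W (W (-exp (-(ρ / (γ * y)) * (a + γ * y / ρ))) /
      (-exp (-(ρ / (γ * y)) * (a + γ * y / ρ)) *
        (1 + W (-exp (-(ρ / (γ * y)) * (a + γ * y / ρ))))))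
      (-exp (-(ρ / (γ * y)) * (a + γ * y / ρ))))
    (hW1 : 1 + W (-exp (-(ρ / (γ * y)) * (a + γ * y / ρ))) ≠ 0) :
    HasDerivAt (fun y => ρ / γ * (W (-exp (-(ρ / (γ * y)) * (a + γ * y / ρ))) /
        (1 + W (-exp (-(ρ / (γ * y)) * (a + γ * y / ρ))))))
      (a * ρ ^ 2 / (γ ^ 2 * y ^ 2) * (W (-exp (-(ρ / (γ * y)) * (a + γ * y / ρ))) /
        (1 + W (-exp (-(ρ / (γ * y)) * (a + γ * y / ρ)))) ^ 3)) y := by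
  refine (((hasDerivAt_comp_neg_exp (hasDerivAt_exponent_right hρ hγ hy) hW).div_one_add
    hW1).const_mul (ρ / γ)).congr_deriv ?_
  field_simp

end

theorem stmt_16 (ρ γ a y : ℝ) (hρ : 0 < ρ) (hγ : 0 < γ) (ha : 0 < a) (hy : 0 < y)
    (W : ℝ → ℝ)
    (hW' : ∀ x ∈ Set.Ioo (-(Real.exp 1)⁻¹) 0,
      HasDerivAt W (W x / (x * (1 + W x))) x)
    (hWlt : ∀ x ∈ Set.Ioo (-(Real.exp 1)⁻¹) 0, W x < -1) :
    let w := W (-Real.exp (-(ρ / (γ * y)) * (a + γ * y / ρ)))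
    deriv
        (fun y : ℝ =>
          deriv (fun a : ℝ => -y * W (-Real.exp (-(ρ / (γ * y)) * (a + γ * y / ρ)))) a)
        y
      = (a * ρ ^ 2 / (γ ^ 2 * y ^ 2)) * (w / (1 + w) ^ 3) ∧
    0 < (a * ρ ^ 2 / (γ ^ 2 * y ^ 2)) * (w / (1 + w) ^ 3) := by
  intro w
  have hmem (t : ℝ) (ht : 0 < t) :
      -exp (-(ρ / (γ * t)) * (a + γ * t / ρ)) ∈ Ioo (-(exp 1)⁻¹) 0 :=
    neg_exp_mem_Ioo_of_lt_neg_one (exponent_lt_neg_one hρ hγ ha ht)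
  have hw : w < -1 := hWlt _ (hmem y hy)
  refine ⟨?_, mul_pos (by positivity) (div_one_add_pow_three_pos hw)⟩
  have hinner : (fun t => deriv (fun a => -t * W (-exp (-(ρ / (γ * t)) * (a + γ * t / ρ)))) a)
      =ᶠ[nhds y] fun t => ρ / γ * (W (-exp (-(ρ / (γ * t)) * (a + γ * t / ρ))) /
        (1 + W (-exp (-(ρ / (γ * t)) * (a + γ * t / ρ))))) := by
    filter_upwards [Ioi_mem_nhds hy] with t ht
    exact (hasDerivAt_consumption_in_a ht.ne' (hW' _ (hmem t ht))).deriv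
  rw [hinner.deriv_eq]
  exact (hasDerivAt_marginal_consumption_in_y hρ.ne' hγ.ne' hy.ne' (hW' _ (hmem y hy))
    (by linarith)).deriv
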